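/- Let n, N be positive integers, 1 ≤ l ≤ N, let m_1, …, m_N be real masses, c_1, …, c_N ∈ ℂⁿ, e ∈ ℂⁿ, and let α ∈ (0,2) be real. Suppose V ∈ ℂⁿ and a REAL constant C satisfy ⟪V, e − c_i⟫ ≠ 0 for all i ≤ l and C • V = Σ_{i=1}^{l} ( m_i / ((α/2) · (2⟪V, e − c_i⟫)^{(α+2)/2}) ) • (e − c_i). Let I ⊆ ℝ be an open interval and g : ℝ → ℝ a real-valued function, twice differentiable on I, with g(t) > 0 and g''(t) = C / g(t)^{(α+2)/2} for all t ∈ I (real powers). Then q(t) = g(t) • V and p(t) = g'(t) • V satisfy, for every t ∈ I, q'(t) = p(t) and p'(t) = Σ_{i=1}^{l} ( m_i / ((α/2) · (2⟪q(t), e − c_i⟫)^{(α+2)/2}) ) • (e − c_i); in particular, no additional branch hypothesis on the complex powers is needed because g(t) is a positive real scalar. -/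

import Mathlib

lemma aux_mul_cpow {r : ℝ} (hr : 0 < r) {z : ℂ} (hz : z ≠ 0) (s : ℂ) :
    ((r : ℂ) * z) ^ s = (r : ℂ) ^ s * z ^ s := by
  have hr' : (r : ℂ) ≠ 0 := Complex.ofReal_ne_zero.mpr hr.ne'
  rw [Complex.cpow_def_of_ne_zero (mul_ne_zero hr' hz),
    Complex.cpow_def_of_ne_zero hr', Complex.cpow_def_of_ne_zero hz,
    Complex.log_ofReal_mul hr hz, ← Complex.exp_add, add_mul,
    Complex.ofReal_log hr.le]

/- STATEMENT 1: Homothetic solutions of the complexified N-center problem with a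
REAL constant `C` and a positive real scalar Kepler factor `g : ℝ → ℝ`
(real powers `Real.rpow` for `g`); no branch hypothesis is needed.
The complex bilinear dot product on ℂⁿ is `∑ j, x j * y j` (no conjugation),
and `z ^ s` for complex `z, s` is the principal branch `Complex.cpow`. -/
theorem ncenter_homothetic_real
    (n N l : ℕ) (hn : 0 < n) (hN : 0 < N) (hl1 : 1 ≤ l) (hlN : l ≤ N)
    (m : Fin N → ℝ) (c : Fin N → Fin n → ℂ) (e : Fin n → ℂ)
    (α : ℝ) (hα : α ∈ Set.Ioo (0 : ℝ) 2)
    (V : Fin n → ℂ) (C : ℝ)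
    (hV : ∀ i : Fin N, (i : ℕ) < l → (∑ j, V j * (e j - c i j)) ≠ 0)
    (hC : (C : ℂ) • V = ∑ i ∈ Finset.univ.filter (fun i : Fin N => (i : ℕ) < l),
      ((m i : ℂ) / (((α : ℂ) / 2) *
        (2 * ∑ j, V j * (e j - c i j)) ^ (((α : ℂ) + 2) / 2))) • (e - c i))
    (a b : ℝ) (g g' g'' : ℝ → ℝ)
    (hg : ∀ t ∈ Set.Ioo a b, HasDerivAt g (g' t) t)
    (hg' : ∀ t ∈ Set.Ioo a b, HasDerivAt g' (g'' t) t)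
    (hg0 : ∀ t ∈ Set.Ioo a b, 0 < g t)
    (hkep : ∀ t ∈ Set.Ioo a b, g'' t = C / (g t) ^ ((α + 2) / 2)) :
    ∀ t ∈ Set.Ioo a b,
      HasDerivAt (fun s => g s • V) (g' t • V) t ∧
      HasDerivAt (fun s => g' s • V)
        (∑ i ∈ Finset.univ.filter (fun i : Fin N => (i : ℕ) < l),
          ((m i : ℂ) / (((α : ℂ) / 2) *
            (2 * ∑ j, (g t • V) j * (e j - c i j)) ^ (((α : ℂ) + 2) / 2))) •
              (e - c i)) t := by
  intro t ht
  have hgt := hg0 t ht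
  refine ⟨(hg t ht).smul_const V, ?_⟩
  set s : ℂ := ((α : ℂ) + 2) / 2 with hs
  have hpow : ((g t : ℂ)) ^ s = ((g t ^ ((α + 2) / 2) : ℝ) : ℂ) := by
    rw [Complex.ofReal_cpow hgt.le]
    norm_num [hs]
  have step : ∀ i ∈ Finset.univ.filter (fun i : Fin N => (i : ℕ) < l),
      ((m i : ℂ) / (((α : ℂ) / 2) *
        (2 * ∑ j, (g t • V) j * (e j - c i j)) ^ s)) • (e - c i)
      = (((g t : ℂ)) ^ s)⁻¹ • (((m i : ℂ) / (((α : ℂ) / 2) *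
          (2 * ∑ j, V j * (e j - c i j)) ^ s)) • (e - c i)) := by
    intro i hi
    have hil : (i : ℕ) < l := by simpa using hi
    have hS : (∑ j, (g t • V) j * (e j - c i j))
        = (g t : ℂ) * ∑ j, V j * (e j - c i j) := by
      rw [Finset.mul_sum]
      refine Finset.sum_congr rfl fun j _ => ?_
      simp [Complex.real_smul]; ring
    have hz : (2 : ℂ) * ∑ j, V j * (e j - c i j) ≠ 0 :=
      mul_ne_zero two_ne_zero (hV i hil)
    rw [hS, smul_smul]
    congr 1
    rw [show (2 : ℂ) * ((g t : ℂ) * ∑ j, V j * (e j - c i j))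
        = (g t : ℂ) * (2 * ∑ j, V j * (e j - c i j)) by ring,
      aux_mul_cpow hgt hz s]
    simp only [div_eq_mul_inv, mul_inv]
    ring
  have hsum : (∑ i ∈ Finset.univ.filter (fun i : Fin N => (i : ℕ) < l),
      ((m i : ℂ) / (((α : ℂ) / 2) *
        (2 * ∑ j, (g t • V) j * (e j - c i j)) ^ s)) • (e - c i))
      = g'' t • V := by
    rw [Finset.sum_congr rfl step, ← Finset.smul_sum, ← hC, hkep t ht, hpow,
      smul_smul]
    funext j
    simp only [Pi.smul_apply, Complex.real_smul, smul_eq_mul]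
    push_cast
    have hx : ((g t ^ ((α + 2) / 2) : ℝ) : ℂ) ≠ 0 :=
      Complex.ofReal_ne_zero.mpr (Real.rpow_pos_of_pos hgt _).ne'
    field_simp
  exact hsum ▸ (hg' t ht).smul_const V
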